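/- Let Γ be a finite tree. Then the extension graph Γᵉ, defined as the graph with vertex set the conjugates g⁻¹xg of generators x ∈ V(Γ) in G(Γ) and edges between commuting elements, contains no triangles; equivalently, any clique in Γᵉ has size at most 2. -/

import Mathlib

/-- Commutation relations of the right-angled Artin group on `Γ`. -/
def raagRels {V : Type*} (Γ : SimpleGraph V) : Set (FreeGroup V) :=
  {r | ∃ u v : V, Γ.Adj u v ∧
    r = FreeGroup.of u * FreeGroup.of v * (FreeGroup.of u)⁻¹ * (FreeGroup.of v)⁻¹}

/-- The right-angled Artin group (partially commutative group) on the graph `Γ`. -/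
abbrev RAAG {V : Type*} (Γ : SimpleGraph V) : Type _ := PresentedGroup (raagRels Γ)

/-- The standard generator of `RAAG Γ` corresponding to a vertex `v`. -/
def RAAG.gen {V : Type*} (Γ : SimpleGraph V) (v : V) : RAAG Γ := PresentedGroup.of v

/-- Vertices of the extension graph: conjugates of standard generators in `RAAG Γ`. -/
def ExtVertex {V : Type*} (Γ : SimpleGraph V) : Type _ :=
  {g : RAAG Γ // ∃ (x : V) (h : RAAG Γ), g = h⁻¹ * RAAG.gen Γ x * h}

/-- The extension graph `Γᵉ`: edges between distinct commuting conjugates of generators. -/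
def extGraph {V : Type*} (Γ : SimpleGraph V) : SimpleGraph (ExtVertex Γ) where
  Adj u v := u ≠ v ∧ Commute u.val v.val
  symm := by constructor; intro u v h; exact ⟨h.1.symm, h.2.symm⟩
  loopless := by constructor; intro u h; exact h.1 rfl

/-!
Commuting distinct conjugates `g⁻¹ x g` and `h⁻¹ y h` of generators force `x ~ y` in `Γ`, so
choosing a generator for each vertex of `Γᵉ` is a graph homomorphism `Γᵉ →g Γ`, and a
homomorphism pulls back triangle-freeness from the tree `Γ`.

The adjacency criterion rests on the centralizer of a generator: `c` commutes with `x` only if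
`c = u * x ^ k` with `u` in the subgroup generated by the neighbours of `x`. This follows from
Britton's lemma after mapping `G(Γ)` injectively into the HNN extension of `G(Γ)` over that
subgroup with stable letter `x`. Exponent sums and the map killing `x` then rule out
`u * x ^ k = τ⁻¹ y τ` unless `y ~ x`, or `y = x` and the conjugate is `x` itself.
-/

open HNNExtension HNNExtension.NormalWord

namespace SimpleGraph

variable {α β : Type*} {G : SimpleGraph α} {n : ℕ}

theorem CliqueFree.comap_hom {H : SimpleGraph β} (f : H →g G) (h : G.CliqueFree n) :
    H.CliqueFree n := by
  rw [cliqueFree_iff] at h ⊢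
  exact ⟨fun c => h.false ⟨f.comp c.toHom, Hom.injective_of_top_hom _⟩⟩

theorem IsClique.card_lt_of_cliqueFree {s : Finset α} (hs : G.IsClique (s : Set α))
    (h : G.CliqueFree n) : s.card < n := by
  by_contra! hn
  obtain ⟨t, hts, rfl⟩ := Finset.exists_subset_card_eq hn
  exact h t ⟨hs.subset (Finset.coe_subset.2 hts), rfl⟩

end SimpleGraph

namespace HNNExtension

variable {G : Type*} [Group G] {A B : Subgroup G} {φ : A ≃* B}

theorem exists_reducedWord_prod_eq (c : HNNExtension G A B φ) :
    ∃ w : ReducedWord G A B, w.prod φ = c := by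
  obtain ⟨d⟩ := TransversalPair.nonempty G A B
  exact ⟨(c • (NormalWord.empty : NormalWord d)).toReducedWord, by simp⟩

theorem ReducedWord.head_mem_of_commute_t (w : ReducedWord G A B) (hw : Commute t (w.prod φ)) :
    w.head ∈ A ∨ w.head ∈ B := by
  -- `s` is the exponent of the last letter, so that `w * t ^ s` is reduced without cancellation;
  -- Britton's lemma then compares the heads of `t ^ s * w` and `w * t ^ s`.
  set s : ℤˣ := (w.toList.getLast?.map Prod.fst).getD 1
  suffices w.head ∈ toSubgroup A B s ∨ w.head ∈ toSubgroup A B (-s) by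
    rcases Int.units_eq_one_or s with hs | hs <;> simp_all [or_comm]
  refine or_iff_not_imp_left.2 fun hs => ?_
  let tw : ReducedWord G A B :=
    ⟨1, (s, w.head) :: w.toList, List.isChain_cons.2 ⟨fun _ _ h => absurd h hs, w.chain⟩⟩
  let wt : ReducedWord G A B :=
    ⟨w.head, w.toList ++ [(s, 1)], List.isChain_append.2 ⟨w.chain, List.isChain_singleton _,
      fun x hx y hy _ => by simp_all [s]; exact hy ▸ rfl⟩⟩
  have hprod : tw.prod φ = wt.prod φ := by
    simpa [tw, wt, ReducedWord.prod, mul_assoc] using (hw.zpow_left (s : ℤ)).eq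
  simpa [tw, wt] using (ReducedWord.map_fst_eq_and_of_prod_eq φ hprod).2 s (by simp [tw])

theorem exists_eq_of_mul_t_zpow_of_commute_t {A : Subgroup G}
    {c : HNNExtension G A A (MulEquiv.refl A)} (hc : Commute t c) :
    ∃ a ∈ A, ∃ k : ℤ, c = of a * t ^ k := by
  obtain ⟨⟨g, l, hl⟩, rfl⟩ := exists_reducedWord_prod_eq c
  induction l generalizing g with
  | nil =>
    have hg : g ∈ A := (ReducedWord.head_mem_of_commute_t _ hc).elim id id
    exact ⟨g, hg, 0, by simp [ReducedWord.prod]⟩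
  | cons p l ih =>
    have hg : g ∈ A := (ReducedWord.head_mem_of_commute_t _ hc).elim id id
    have hgt : Commute (of g) (t : HNNExtension G A A (MulEquiv.refl A)) :=
      (t_mul_of (φ := MulEquiv.refl A) ⟨g, hg⟩).symm
    set w : ReducedWord G A A := ⟨p.2, l, (List.isChain_cons.1 hl).2⟩
    have hprod : ReducedWord.prod (MulEquiv.refl A) ⟨g, p :: l, hl⟩ =
        of g * t ^ (p.1 : ℤ) * w.prod (MulEquiv.refl A) := by
      simp [w, ReducedWord.prod, mul_assoc]
    rw [hprod] at hc ⊢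
    have hcw : Commute t (w.prod (MulEquiv.refl A)) := by
      have hgu := hgt.symm.mul_right (Commute.self_zpow t (p.1 : ℤ))
      simpa [mul_assoc] using hgu.inv_right.mul_right hc
    obtain ⟨a, ha, k, hk⟩ := ih p.2 _ hcw
    have hat : Commute (of a) (t : HNNExtension G A A (MulEquiv.refl A)) :=
      (t_mul_of (φ := MulEquiv.refl A) ⟨a, ha⟩).symm
    refine ⟨g * a, mul_mem hg ha, p.1 + k, ?_⟩
    rw [hk, map_mul, zpow_add, mul_assoc (of g), ← mul_assoc _ (of a), ← (hat.zpow_right _).eq]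
    group

end HNNExtension

namespace RAAG

variable {V : Type*} (Γ : SimpleGraph V)

theorem gen_commute_gen {u v : V} (h : Γ.Adj u v) : Commute (gen Γ u) (gen Γ v) := by
  rw [← commutatorElement_eq_one_iff_commute]
  have hrel : PresentedGroup.mk (raagRels Γ)
      (FreeGroup.of u * FreeGroup.of v * (FreeGroup.of u)⁻¹ * (FreeGroup.of v)⁻¹) = 1 :=
    (QuotientGroup.eq_one_iff _).2 (Subgroup.subset_normalClosure ⟨u, v, h, rfl⟩)
  simpa [commutatorElement_def, gen, PresentedGroup.of] using hrel

def lift {H : Type*} [Group H] (f : V → H) (hf : ∀ u v, Γ.Adj u v → Commute (f u) (f v)) :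
    RAAG Γ →* H :=
  PresentedGroup.toGroup (rels := raagRels Γ) (f := f) <| by
    rintro r ⟨u, v, huv, rfl⟩
    simpa [commutatorElement_def] using (hf u v huv).commutator_eq

@[simp]
theorem lift_gen {H : Type*} [Group H] (f : V → H)
    (hf : ∀ u v, Γ.Adj u v → Commute (f u) (f v)) (v : V) : lift Γ f hf (gen Γ v) = f v :=
  PresentedGroup.toGroup.of _

def linkSubgroup (x : V) : Subgroup (RAAG Γ) :=
  Subgroup.closure (gen Γ '' Γ.neighborSet x)

variable {Γ}

theorem hom_ext {H : Type*} [Group H] {φ ψ : RAAG Γ →* H}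
    (h : ∀ v, φ (gen Γ v) = ψ (gen Γ v)) : φ = ψ :=
  PresentedGroup.ext h

theorem commute_gen_of_mem_linkSubgroup {x : V} {u : RAAG Γ} (hu : u ∈ linkSubgroup Γ x) :
    Commute (gen Γ x) u := by
  have hle : linkSubgroup Γ x ≤ Subgroup.centralizer {gen Γ x} :=
    (Subgroup.closure_le _).2 <| Set.image_subset_iff.2 fun v hv =>
      Subgroup.mem_centralizer_singleton_iff.2 (gen_commute_gen Γ hv).eq.symm
  exact (Subgroup.mem_centralizer_singleton_iff.1 (hle hu)).symm

variable (Γ) in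
def ofHNN (x : V) :
    HNNExtension (RAAG Γ) (linkSubgroup Γ x) (linkSubgroup Γ x) (MulEquiv.refl _) →* RAAG Γ :=
  HNNExtension.lift (MonoidHom.id _) (gen Γ x) fun a =>
    (commute_gen_of_mem_linkSubgroup a.2).eq

@[simp]
theorem ofHNN_t (x : V) : ofHNN Γ x t = gen Γ x :=
  lift_t _ _ _

@[simp]
theorem ofHNN_of (x : V) (g : RAAG Γ) : ofHNN Γ x (of g) = g :=
  lift_of _ _ _ g

section DecidableEq

variable (Γ) [DecidableEq V]

def expSum (y : V) : RAAG Γ →* Multiplicative ℤ :=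
  lift Γ (fun v => Multiplicative.ofAdd (if v = y then 1 else 0)) fun _ _ _ => Commute.all _ _

def killGen (x : V) : RAAG Γ →* RAAG Γ :=
  lift Γ (fun v => if v = x then 1 else gen Γ v) fun u v huv => by
    by_cases hu : u = x
    · simp [hu]
    by_cases hv : v = x
    · simp [hv]
    simpa [hu, hv] using gen_commute_gen Γ huv

/-- Not an isomorphism onto the HNN extension, but injective since `ofHNN` is a left inverse;
this is all the centralizer computation needs. -/
def toHNN (x : V) :
    RAAG Γ →* HNNExtension (RAAG Γ) (linkSubgroup Γ x) (linkSubgroup Γ x) (MulEquiv.refl _) :=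
  lift Γ (fun v => if v = x then t else of (gen Γ v)) fun u v huv => by
    have t_commute {w : V} (hw : Γ.Adj x w) : Commute t (of (gen Γ w) :
        HNNExtension (RAAG Γ) (linkSubgroup Γ x) (linkSubgroup Γ x) (MulEquiv.refl _)) :=
      t_mul_of (φ := MulEquiv.refl _)
        (⟨gen Γ w, Subgroup.subset_closure ⟨w, hw, rfl⟩⟩ : linkSubgroup Γ x)
    by_cases hu : u = x
    · subst hu
      simpa [huv.ne'] using t_commute huv
    by_cases hv : v = x
    · subst hv
      simpa [hu] using (t_commute huv.symm).symm
    simpa [hu, hv] using (gen_commute_gen Γ huv).map of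

variable {Γ}

@[simp]
theorem expSum_gen (y v : V) :
    expSum Γ y (gen Γ v) = Multiplicative.ofAdd (if v = y then 1 else 0) :=
  lift_gen _ _ _ v

theorem expSum_conj (y : V) (τ g : RAAG Γ) : expSum Γ y (τ⁻¹ * g * τ) = expSum Γ y g := by
  simp [mul_comm]

@[simp]
theorem killGen_gen (x v : V) : killGen Γ x (gen Γ v) = if v = x then 1 else gen Γ v :=
  lift_gen _ _ _ v

theorem expSum_eq_one_of_mem_closure {S : Set V} {y : V} (hy : y ∉ S) {u : RAAG Γ}
    (hu : u ∈ Subgroup.closure (gen Γ '' S)) : expSum Γ y u = 1 :=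
  (Subgroup.closure_le (expSum Γ y).ker).2 (Set.image_subset_iff.2 fun v hv => by
    simp [ne_of_mem_of_not_mem hv hy]) hu

theorem killGen_eq_self_of_mem_closure {S : Set V} {x : V} (hx : x ∉ S) {u : RAAG Γ}
    (hu : u ∈ Subgroup.closure (gen Γ '' S)) : killGen Γ x u = u :=
  (Subgroup.closure_le (MonoidHom.eqLocus (killGen Γ x) (MonoidHom.id _))).2
    (Set.image_subset_iff.2 fun v hv => by
      change killGen Γ x (gen Γ v) = gen Γ v
      simp [ne_of_mem_of_not_mem hv hx]) hu

theorem ofHNN_toHNN (x : V) (g : RAAG Γ) : ofHNN Γ x (toHNN Γ x g) = g := by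
  suffices (ofHNN Γ x).comp (toHNN Γ x) = MonoidHom.id _ from DFunLike.congr_fun this g
  refine hom_ext fun v => ?_
  by_cases hv : v = x
  · subst hv
    simp [toHNN]
  · simp [toHNN, hv]

end DecidableEq

theorem exists_eq_mul_gen_zpow_of_commute {x : V} {c : RAAG Γ} (hc : Commute (gen Γ x) c) :
    ∃ u ∈ linkSubgroup Γ x, ∃ k : ℤ, c = u * gen Γ x ^ k := by
  classical
  have htc : Commute t (toHNN Γ x c) := by simpa [toHNN] using hc.map (toHNN Γ x)
  obtain ⟨u, hu, k, hk⟩ := exists_eq_of_mul_t_zpow_of_commute_t htc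
  refine ⟨u, hu, k, ?_⟩
  simpa [ofHNN_toHNN] using congrArg (ofHNN Γ x) hk

theorem conj_gen_eq_gen_of_commute {x : V} {τ : RAAG Γ}
    (hc : Commute (gen Γ x) (τ⁻¹ * gen Γ x * τ)) : τ⁻¹ * gen Γ x * τ = gen Γ x := by
  classical
  obtain ⟨u, hu, k, hcu⟩ := exists_eq_mul_gen_zpow_of_commute hc
  have hx : x ∉ Γ.neighborSet x := Γ.irrefl
  have hk : k = 1 := by
    have := congrArg (expSum Γ x) hcu
    rw [expSum_conj, map_mul, map_zpow, expSum_eq_one_of_mem_closure hx hu] at this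
    simpa [← ofAdd_zsmul] using this.symm
  have hu1 : u = 1 := by
    have := congrArg (killGen Γ x) hcu
    simpa [killGen_eq_self_of_mem_closure hx hu] using this.symm
  rw [hcu, hk, hu1, one_mul, zpow_one]

theorem adj_of_commute_conj_gen {x y : V} (hxy : x ≠ y) {τ : RAAG Γ}
    (hc : Commute (gen Γ x) (τ⁻¹ * gen Γ y * τ)) : Γ.Adj x y := by
  classical
  by_contra hadj
  obtain ⟨u, hu, k, hcu⟩ := exists_eq_mul_gen_zpow_of_commute hc
  have := congrArg (expSum Γ y) hcu
  rw [expSum_conj, map_mul, map_zpow, expSum_eq_one_of_mem_closure hadj hu] at this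
  simp [hxy] at this

theorem adj_of_commute_conj_gen_conj_gen {x y : V} {g h : RAAG Γ}
    (hc : Commute (g⁻¹ * gen Γ x * g) (h⁻¹ * gen Γ y * h))
    (hne : g⁻¹ * gen Γ x * g ≠ h⁻¹ * gen Γ y * h) : Γ.Adj x y := by
  have hconj : MulAut.conj g (h⁻¹ * gen Γ y * h) = (h * g⁻¹)⁻¹ * gen Γ y * (h * g⁻¹) := by
    simp only [MulAut.conj_apply]
    group
  have hc' : Commute (gen Γ x) ((h * g⁻¹)⁻¹ * gen Γ y * (h * g⁻¹)) := by
    simpa [hconj, mul_assoc] using hc.map (MulAut.conj g)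
  rcases eq_or_ne x y with rfl | hxy
  · refine absurd ?_ hne
    calc g⁻¹ * gen Γ x * g = g⁻¹ * ((h * g⁻¹)⁻¹ * gen Γ x * (h * g⁻¹)) * g := by
          rw [conj_gen_eq_gen_of_commute hc']
      _ = h⁻¹ * gen Γ x * h := by group
  · exact adj_of_commute_conj_gen hxy hc'

end RAAG

noncomputable def extGraphProj {V : Type*} (Γ : SimpleGraph V) : extGraph Γ →g Γ where
  toFun a := a.2.choose
  map_rel' {a b} hab := by
    obtain ⟨g, hg⟩ := a.2.choose_spec
    obtain ⟨h, hh⟩ := b.2.choose_spec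
    refine RAAG.adj_of_commute_conj_gen_conj_gen (hg ▸ hh ▸ hab.2) fun he => hab.1 ?_
    exact Subtype.ext (hg.trans (he.trans hh.symm))

theorem extGraph_of_tree_triangleFree_general
    {V : Type*} (Γ : SimpleGraph V) (hΓ : Γ.IsTree) :
    (extGraph Γ).CliqueFree 3 ∧
      ∀ s : Finset (ExtVertex Γ), (extGraph Γ).IsClique ↑s → s.card ≤ 2 := by
  have hfree : (extGraph Γ).CliqueFree 3 :=
    (hΓ.isAcyclic.cliqueFree le_rfl).comap_hom (extGraphProj Γ)
  exact ⟨hfree, fun s hs => Nat.lt_succ_iff.1 (hs.card_lt_of_cliqueFree hfree)⟩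

/-- The extension graph of a finite tree has no triangles; equivalently every clique
has size at most `2`. -/
theorem extGraph_of_tree_triangleFree
    {V : Type*} [Fintype V] (Γ : SimpleGraph V) (hΓ : Γ.IsTree) :
    (extGraph Γ).CliqueFree 3 ∧
      ∀ s : Finset (ExtVertex Γ), (extGraph Γ).IsClique ↑s → s.card ≤ 2 :=
  extGraph_of_tree_triangleFree_general Γ hΓ
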